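/- Let M² be a closed connected smooth surface, π : ℝ⁴ → ℝ³ a surjective linear map, and F, G : M² → ℝ⁴ immersions such that f = π ∘ F and g = π ∘ G are immersions (locally generic maps with no cross-cap points). If f and g are regularly homotopic through immersions of M² into ℝ³, then F ∼_π G: any regular homotopy between f and g lifts to a smooth homotopy H : M² × [0,1] → ℝ⁴ from F to G with every H_t an immersion and every π ∘ H_t an immersion. -/

import Mathlib

/-!
Choose a linear section `s` of `π`. Split a map into `ℝ⁴` into its `s ∘ π`-part and its
`ker π`-part: the lift `H_t = s ∘ K_t + ((1 - t) • (F - s π F) + t • (G - s π G))` takes the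
`s`-part from `K` and joins the `ker π`-parts of `F` and `G` by a straight line. Then
`π ∘ H_t = K_t`, and since `d(K_t) = π ∘ d(H_t)` is injective, so is `d(H_t)`.
-/

noncomputable section

open Set Function
open scoped Manifold

/-- The cross-cap (Whitney umbrella) normal form `(x₁, x₂) ↦ (x₁², x₂, x₁x₂)`. -/
def crossCapNF (x : EuclideanSpace ℝ (Fin 2)) : EuclideanSpace ℝ (Fin 3) :=
  WithLp.toLp 2 (fun j => ![x 0 ^ 2, x 1, x 0 * x 1] j)

variable {M : Type*} [TopologicalSpace M] [ChartedSpace (EuclideanSpace ℝ (Fin 2)) M]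

/-- `f : M² → ℝ³` has a cross-cap (Whitney umbrella) singularity at `p`: there are
local coordinate systems (smooth charts) centered at `p` and at `f p` in which `f`
takes the normal form `(x₁, x₂) ↦ (x₁², x₂, x₁x₂)`. -/
def IsCrossCapAt₂ (f : M → EuclideanSpace ℝ (Fin 3)) (p : M) : Prop :=
  ∃ (φ : PartialHomeomorph M (EuclideanSpace ℝ (Fin 2)))
    (ψ : PartialHomeomorph (EuclideanSpace ℝ (Fin 3)) (EuclideanSpace ℝ (Fin 3))),
    p ∈ φ.source ∧ φ p = 0 ∧ f p ∈ ψ.source ∧ ψ (f p) = 0 ∧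
    ContMDiffOn (𝓡 2) (𝓡 2) (⊤ : ℕ∞) φ φ.source ∧
    ContMDiffOn (𝓡 2) (𝓡 2) (⊤ : ℕ∞) φ.symm φ.target ∧
    ContMDiffOn (𝓡 3) (𝓡 3) (⊤ : ℕ∞) ψ ψ.source ∧
    ContMDiffOn (𝓡 3) (𝓡 3) (⊤ : ℕ∞) ψ.symm ψ.target ∧
    ∀ x ∈ φ.source, f x ∈ ψ.source ∧ ψ (f x) = crossCapNF (φ x)

/-- The set `S(f)` of cross-cap points of `f : M² → ℝ³`. -/
def singularSet₂ (f : M → EuclideanSpace ℝ (Fin 3)) : Set M :=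
  {p | IsCrossCapAt₂ f p}

/-- `f : M² → ℝ³` is locally generic: it is smooth and every point of `M²` is either a
regular point of `f` (the differential there is injective) or a cross-cap
singularity. -/
def IsLocallyGeneric₂ (f : M → EuclideanSpace ℝ (Fin 3)) : Prop :=
  ContMDiff (𝓡 2) (𝓡 3) (⊤ : ℕ∞) f ∧
  ∀ p : M, Injective (mfderiv (𝓡 2) (𝓡 3) f p) ∨ IsCrossCapAt₂ f p

/-- `H : M² × [0,1] → ℝ³` is a regular homotopy from `f` to `g` through locally
generic maps: it is smooth on `M² × [0,1]`, `H₀ = f`, `H₁ = g`, and every stage `H_t`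
is locally generic. -/
def IsRegularHomotopy₂ (f g : M → EuclideanSpace ℝ (Fin 3)) (H : M × ℝ → EuclideanSpace ℝ (Fin 3)) :
    Prop :=
  ContMDiffOn ((𝓡 2).prod 𝓘(ℝ, ℝ)) (𝓡 3) (⊤ : ℕ∞) H (univ ×ˢ Icc (0 : ℝ) 1) ∧
  (∀ x, H (x, 0) = f x) ∧ (∀ x, H (x, 1) = g x) ∧
  ∀ t ∈ Icc (0 : ℝ) 1, IsLocallyGeneric₂ (fun x => H (x, t))

/-- Regular homotopy of immersions `M² → ℝ⁴`: a smooth homotopy all of whose stages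
are immersions. -/
def ImmRegHomotopic4 (F G : M → EuclideanSpace ℝ (Fin 4)) : Prop :=
  ∃ H : M × ℝ → EuclideanSpace ℝ (Fin 4),
    ContMDiffOn ((𝓡 2).prod 𝓘(ℝ, ℝ)) (𝓡 4) (⊤ : ℕ∞) H (univ ×ˢ Icc (0 : ℝ) 1) ∧
    (∀ x, H (x, 0) = F x) ∧ (∀ x, H (x, 1) = G x) ∧
    ∀ t ∈ Icc (0 : ℝ) 1, ∀ x,
      Injective (mfderiv (𝓡 2) (𝓡 4) (fun y => H (y, t)) x)

/-- `F ∼_π G`: there is a smooth homotopy `H : M² × [0,1] → ℝ⁴` from `F` to `G` such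
that every stage `H_t` is an immersion and every projection `π ∘ H_t` is locally
generic. -/
def PiHomotopic (π : EuclideanSpace ℝ (Fin 4) →L[ℝ] EuclideanSpace ℝ (Fin 3))
    (F G : M → EuclideanSpace ℝ (Fin 4)) : Prop :=
  ∃ H : M × ℝ → EuclideanSpace ℝ (Fin 4),
    ContMDiffOn ((𝓡 2).prod 𝓘(ℝ, ℝ)) (𝓡 4) (⊤ : ℕ∞) H (univ ×ˢ Icc (0 : ℝ) 1) ∧
    (∀ x, H (x, 0) = F x) ∧ (∀ x, H (x, 1) = G x) ∧
    ∀ t ∈ Icc (0 : ℝ) 1,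
      (∀ x, Injective (mfderiv (𝓡 2) (𝓡 4) (fun y => H (y, t)) x)) ∧
      IsLocallyGeneric₂ (fun x => π (H (x, t)))

section

variable {V W : Type*} [NormedAddCommGroup V] [NormedSpace ℝ V]
  [NormedAddCommGroup W] [NormedSpace ℝ W] {N : Type*}

def liftHomotopy (π : V →L[ℝ] W) (s : W →L[ℝ] V) (F G : N → V) (K : N × ℝ → W)
    (p : N × ℝ) : V :=
  s (K p) + ((1 - p.2) • (F p.1 - s (π (F p.1))) + p.2 • (G p.1 - s (π (G p.1))))

variable {π : V →L[ℝ] W} {s : W →L[ℝ] V} {F G : N → V} {K : N × ℝ → W}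

theorem map_liftHomotopy (hs : ∀ y, π (s y) = y) (p : N × ℝ) :
    π (liftHomotopy π s F G K p) = K p := by
  simp [liftHomotopy, hs]

theorem liftHomotopy_zero (hK : ∀ x, K (x, 0) = π (F x)) (x : N) :
    liftHomotopy π s F G K (x, 0) = F x := by
  simp [liftHomotopy, hK]

theorem liftHomotopy_one (hK : ∀ x, K (x, 1) = π (G x)) (x : N) :
    liftHomotopy π s F G K (x, 1) = G x := by
  simp [liftHomotopy, hK]

variable {E : Type*} [NormedAddCommGroup E] [NormedSpace ℝ E]
  {H : Type*} [TopologicalSpace H] {I : ModelWithCorners ℝ E H}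
  [TopologicalSpace N] [ChartedSpace H N]

theorem injective_mfderiv_of_injective_mfderiv_clm_comp (A : V →L[ℝ] W) {f : N → V} {x : N}
    (hf : MDifferentiableAt I 𝓘(ℝ, V) f x)
    (h : Injective (mfderiv I 𝓘(ℝ, W) (fun y => A (f y)) x)) :
    Injective (mfderiv I 𝓘(ℝ, V) f x) := by
  have hcomp : mfderiv I 𝓘(ℝ, W) (fun y => A (f y)) x = A.comp (mfderiv I 𝓘(ℝ, V) f x) := by
    have chainRule := mfderiv_comp x A.mdifferentiableAt hf
    rwa [A.mfderiv_eq] at chainRule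
  rw [hcomp] at h
  exact h.of_comp (f := A)

theorem ContMDiffOn.contMDiff_slice {E' H' : Type*} [NormedAddCommGroup E'] [NormedSpace ℝ E']
    [TopologicalSpace H'] {J : ModelWithCorners ℝ E' H'} {T : Type*} [TopologicalSpace T]
    [ChartedSpace H' T] {n : WithTop ℕ∞} {K : N × T → V} {u : Set T}
    (hK : ContMDiffOn (I.prod J) 𝓘(ℝ, V) n K (univ ×ˢ u)) {t : T} (ht : t ∈ u) :
    ContMDiff I 𝓘(ℝ, V) n (fun x => K (x, t)) := by
  rw [← contMDiffOn_univ]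
  exact hK.comp (contMDiff_id.prodMk contMDiff_const).contMDiffOn fun _ _ => ⟨trivial, ht⟩

theorem contMDiffOn_liftHomotopy {n : WithTop ℕ∞} {u : Set (N × ℝ)}
    (hF : ContMDiff I 𝓘(ℝ, V) n F) (hG : ContMDiff I 𝓘(ℝ, V) n G)
    (hK : ContMDiffOn (I.prod 𝓘(ℝ, ℝ)) 𝓘(ℝ, W) n K u) :
    ContMDiffOn (I.prod 𝓘(ℝ, ℝ)) 𝓘(ℝ, V) n (liftHomotopy π s F G K) u := by
  have kerPart : ∀ {f : N → V}, ContMDiff I 𝓘(ℝ, V) n f →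
      ContMDiff (I.prod 𝓘(ℝ, ℝ)) 𝓘(ℝ, V) n fun p : N × ℝ => f p.1 - s (π (f p.1)) :=
    fun hf => (hf.sub (s.contMDiff.comp (π.contMDiff.comp hf))).comp contMDiff_fst
  have interpolation : ContMDiff (I.prod 𝓘(ℝ, ℝ)) 𝓘(ℝ, V) n fun p : N × ℝ =>
      (1 - p.2) • (F p.1 - s (π (F p.1))) + p.2 • (G p.1 - s (π (G p.1))) :=
    ((contMDiff_const.sub contMDiff_snd).smul (kerPart hF)).add
      (contMDiff_snd.smul (kerPart hG))
  exact (s.contMDiff.comp_contMDiffOn hK).add interpolation.contMDiffOn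

end

theorem stmt16_general
    (π : EuclideanSpace ℝ (Fin 4) →L[ℝ] EuclideanSpace ℝ (Fin 3))
    (hπ : Surjective (⇑π)) (F G : M → EuclideanSpace ℝ (Fin 4))
    (hF : ContMDiff (𝓡 2) (𝓡 4) (⊤ : ℕ∞) F ∧ ∀ x, Injective (mfderiv (𝓡 2) (𝓡 4) F x))
    (hG : ContMDiff (𝓡 2) (𝓡 4) (⊤ : ℕ∞) G ∧ ∀ x, Injective (mfderiv (𝓡 2) (𝓡 4) G x))
    (K : M × ℝ → EuclideanSpace ℝ (Fin 3))
    (hK : ContMDiffOn ((𝓡 2).prod 𝓘(ℝ, ℝ)) (𝓡 3) (⊤ : ℕ∞) K (univ ×ˢ Icc (0 : ℝ) 1) ∧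
      (∀ x, K (x, 0) = π (F x)) ∧ (∀ x, K (x, 1) = π (G x)) ∧
      ∀ t ∈ Icc (0 : ℝ) 1, ∀ x,
        Injective (mfderiv (𝓡 2) (𝓡 3) (fun y => K (y, t)) x)) :
    PiHomotopic π F G ∧
      ∃ H : M × ℝ → EuclideanSpace ℝ (Fin 4),
        ContMDiffOn ((𝓡 2).prod 𝓘(ℝ, ℝ)) (𝓡 4) (⊤ : ℕ∞) H (univ ×ˢ Icc (0 : ℝ) 1) ∧
        (∀ x, H (x, 0) = F x) ∧ (∀ x, H (x, 1) = G x) ∧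
        (∀ t ∈ Icc (0 : ℝ) 1, ∀ x,
          Injective (mfderiv (𝓡 2) (𝓡 4) (fun y => H (y, t)) x)) ∧
        ∀ t ∈ Icc (0 : ℝ) 1, ∀ x, π (H (x, t)) = K (x, t) := by
  obtain ⟨hKsmooth, hK0, hK1, hKimm⟩ := hK
  obtain ⟨s, hs⟩ := π.exists_rightInverse_of_surjective (LinearMap.range_eq_top.2 hπ)
  have hπs : ∀ y, π (s y) = y := fun y => congr($hs y)
  set L := liftHomotopy π s F G K
  have hLsmooth := contMDiffOn_liftHomotopy (π := π) (s := s) hF.1 hG.1 hKsmooth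
  have hproj : ∀ t, (fun x => π (L (x, t))) = fun x => K (x, t) :=
    fun t => funext fun x => map_liftHomotopy hπs (x, t)
  have hLimm : ∀ t ∈ Icc (0 : ℝ) 1, ∀ x, Injective (mfderiv (𝓡 2) (𝓡 4) (fun y => L (y, t)) x) :=
    fun t ht x => injective_mfderiv_of_injective_mfderiv_clm_comp π
      ((hLsmooth.contMDiff_slice ht).mdifferentiableAt (by simp))
      (by rw [hproj t]; exact hKimm t ht x)
  refine ⟨⟨L, hLsmooth, liftHomotopy_zero hK0, liftHomotopy_one hK1,
      fun t ht => ⟨hLimm t ht, ?_⟩⟩,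
    L, hLsmooth, liftHomotopy_zero hK0, liftHomotopy_one hK1, hLimm,
    fun t _ x => map_liftHomotopy hπs (x, t)⟩
  rw [hproj t]
  exact ⟨hKsmooth.contMDiff_slice ht, fun x => Or.inl (hKimm t ht x)⟩

/-- let `F, G : M² → ℝ⁴` be immersions of a closed connected surface
and `π : ℝ⁴ → ℝ³` a surjective linear projection such that `f = π ∘ F` and
`g = π ∘ G` are immersions (locally generic maps without cross-caps). If `f` and `g`
are regularly homotopic through immersions into `ℝ³`, then `F ∼_π G`; indeed any
regular homotopy `K` between `f` and `g` lifts to a smooth homotopy `H` from `F` to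
`G` through immersions into `ℝ⁴` with `π ∘ H_t = K_t` (so that every `π ∘ H_t` is an
immersion). -/
theorem stmt16 [IsManifold (𝓡 2) (⊤ : ℕ∞) M] [CompactSpace M] [ConnectedSpace M]
    (π : EuclideanSpace ℝ (Fin 4) →L[ℝ] EuclideanSpace ℝ (Fin 3))
    (hπ : Surjective (⇑π)) (F G : M → EuclideanSpace ℝ (Fin 4))
    (hF : ContMDiff (𝓡 2) (𝓡 4) (⊤ : ℕ∞) F ∧ ∀ x, Injective (mfderiv (𝓡 2) (𝓡 4) F x))
    (hG : ContMDiff (𝓡 2) (𝓡 4) (⊤ : ℕ∞) G ∧ ∀ x, Injective (mfderiv (𝓡 2) (𝓡 4) G x))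
    (hf : IsLocallyGeneric₂ (fun x => π (F x)) ∧
      ∀ x, Injective (mfderiv (𝓡 2) (𝓡 3) (fun y => π (F y)) x))
    (hg : IsLocallyGeneric₂ (fun x => π (G x)) ∧
      ∀ x, Injective (mfderiv (𝓡 2) (𝓡 3) (fun y => π (G y)) x))
    (K : M × ℝ → EuclideanSpace ℝ (Fin 3))
    (hK : ContMDiffOn ((𝓡 2).prod 𝓘(ℝ, ℝ)) (𝓡 3) (⊤ : ℕ∞) K (univ ×ˢ Icc (0 : ℝ) 1) ∧
      (∀ x, K (x, 0) = π (F x)) ∧ (∀ x, K (x, 1) = π (G x)) ∧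
      ∀ t ∈ Icc (0 : ℝ) 1, ∀ x,
        Injective (mfderiv (𝓡 2) (𝓡 3) (fun y => K (y, t)) x)) :
    PiHomotopic π F G ∧
      ∃ H : M × ℝ → EuclideanSpace ℝ (Fin 4),
        ContMDiffOn ((𝓡 2).prod 𝓘(ℝ, ℝ)) (𝓡 4) (⊤ : ℕ∞) H (univ ×ˢ Icc (0 : ℝ) 1) ∧
        (∀ x, H (x, 0) = F x) ∧ (∀ x, H (x, 1) = G x) ∧
        (∀ t ∈ Icc (0 : ℝ) 1, ∀ x,
          Injective (mfderiv (𝓡 2) (𝓡 4) (fun y => H (y, t)) x)) ∧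
        ∀ t ∈ Icc (0 : ℝ) 1, ∀ x, π (H (x, t)) = K (x, t) :=
  stmt16_general π hπ F G hF hG K hK

end
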